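/- arXiv:2512.16778 — 5 statements merged into one kernel-verified Lean document; each statement's English description precedes it below -/
import Mathlib

section
/- For probability distributions p, q on a finite set and real numbers γ, γ' with 1 ≤ γ' ≤ γ, the hockey-stick divergence satisfies E_{γ'}(p‖q) ≤ (γ−γ')/(γ+1) + ((γ'+1)/(γ+1)) · max(E_γ(p‖q), E_γ(q‖p)). -/
open Finset Real

/-- `p` is a probability distribution on the finite set `X`. -/
def IsProb {X : Type*} [Fintype X] (p : X → ℝ) : Prop :=
  (∀ x, 0 ≤ p x) ∧ ∑ x, p x = 1

/-- Classical hockey-stick divergence `E_γ(p‖q)`. -/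
noncomputable def hsDiv {X : Type*} [Fintype X] (γ : ℝ) (p q : X → ℝ) : ℝ :=
  ∑ x, max 0 (p x - γ * q x)

theorem stmt0 {X : Type*} [Fintype X] (p q : X → ℝ) (hp : IsProb p) (hq : IsProb q)
    (γ γ' : ℝ) (hγ'1 : 1 ≤ γ') (hγ'γ : γ' ≤ γ) :
    hsDiv γ' p q ≤ (γ - γ') / (γ + 1)
      + ((γ' + 1) / (γ + 1)) * max (hsDiv γ p q) (hsDiv γ q p) := by
  classical
  obtain ⟨hp0, hp1⟩ := hp
  obtain ⟨hq0, hq1⟩ := hq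
  set S : Finset X := Finset.univ.filter (fun x => γ' * q x < p x) with hS
  set a : ℝ := ∑ x ∈ S, p x with ha
  set b : ℝ := ∑ x ∈ S, q x with hb
  set M : ℝ := max (hsDiv γ p q) (hsDiv γ q p) with hM
  have hγ1 : (1:ℝ) ≤ γ := le_trans hγ'1 hγ'γ
  have hγ0 : (0:ℝ) < γ + 1 := by linarith
  -- value of hsDiv γ'
  have hE' : hsDiv γ' p q = a - γ' * b := by
    unfold hsDiv
    have : ∀ x, max 0 (p x - γ' * q x)
        = if γ' * q x < p x then p x - γ' * q x else 0 := by
      intro x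
      split <;> rename_i h
      · rw [max_eq_right]; linarith
      · rw [max_eq_left]; push_neg at h; linarith
    simp_rw [this]
    rw [Finset.sum_ite, Finset.sum_const_zero, add_zero, ha, hb, hS,
      Finset.sum_sub_distrib, Finset.mul_sum]
  -- first constraint
  have h1 : a - γ * b ≤ M := by
    have step1 : a - γ * b ≤ ∑ x ∈ S, max 0 (p x - γ * q x) := by
      rw [ha, hb, Finset.mul_sum, ← Finset.sum_sub_distrib]
      exact Finset.sum_le_sum fun x _ => le_max_right _ _
    have step2 : ∑ x ∈ S, max 0 (p x - γ * q x) ≤ hsDiv γ p q := by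
      unfold hsDiv
      exact Finset.sum_le_sum_of_subset_of_nonneg (Finset.subset_univ S)
        (fun x _ _ => le_max_left _ _)
    exact le_trans (le_trans step1 step2) (le_max_left _ _)
  -- second constraint
  have hcp : ∑ x ∈ Sᶜ, p x = 1 - a := by
    have := Finset.sum_add_sum_compl S p
    rw [hp1] at this; rw [ha]; linarith
  have hcq : ∑ x ∈ Sᶜ, q x = 1 - b := by
    have := Finset.sum_add_sum_compl S q
    rw [hq1] at this; rw [hb]; linarith
  have h2 : (1 - b) - γ * (1 - a) ≤ M := by
    have step1 : (1 - b) - γ * (1 - a) ≤ ∑ x ∈ Sᶜ, max 0 (q x - γ * p x) := by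
      rw [← hcp, ← hcq, Finset.mul_sum, ← Finset.sum_sub_distrib]
      exact Finset.sum_le_sum fun x _ => le_max_right _ _
    have step2 : ∑ x ∈ Sᶜ, max 0 (q x - γ * p x) ≤ hsDiv γ q p := by
      unfold hsDiv
      exact Finset.sum_le_sum_of_subset_of_nonneg (Finset.subset_univ _)
        (fun x _ _ => le_max_left _ _)
    exact le_trans (le_trans step1 step2) (le_max_right _ _)
  -- arithmetic conclusion
  have key : (γ + 1) * (a - γ' * b) ≤ (γ - γ') + (γ' + 1) * M := by
    rcases eq_or_lt_of_le hγ1 with h | h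
    · -- γ = 1, hence γ' = 1
      subst h
      have hγ'' : γ' = 1 := le_antisymm hγ'γ hγ'1
      subst hγ''
      nlinarith [h1]
    · have hpos : 0 < γ - 1 := by linarith
      have c1 : 0 ≤ γ * γ' - 1 := by nlinarith
      have c2 : 0 ≤ γ - γ' := by linarith
      have comb : 0 ≤ (γ * γ' - 1) * (M - (a - γ * b))
          + (γ - γ') * (M - ((1 - b) - γ * (1 - a))) := by
        have t1 : 0 ≤ M - (a - γ * b) := by linarith
        have t2 : 0 ≤ M - ((1 - b) - γ * (1 - a)) := by linarith
        positivity
      have expand : (γ * γ' - 1) * (M - (a - γ * b))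
          + (γ - γ') * (M - ((1 - b) - γ * (1 - a)))
          = (γ - 1) * (((γ - γ') + (γ' + 1) * M) - (γ + 1) * (a - γ' * b)) := by
        ring
      rw [expand] at comb
      nlinarith
  rw [hE']
  rw [div_mul_eq_mul_div, ← add_div, le_div_iff₀ hγ0]
  nlinarith [key]
end

section
/- Let p, q be probability distributions on a finite set and let γ ≥ γ' ≥ 1. If E_{γ'}(p‖q) ≤ (γ − γ') · min_x q(x), then E_γ(p‖q) = 0. -/
open Finset Real

theorem stmt1 {X : Type*} [Fintype X] [Nonempty X] (p q : X → ℝ)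
    (hp : IsProb p) (hq : IsProb q) (γ γ' : ℝ) (hγ'1 : 1 ≤ γ') (hγ'γ : γ' ≤ γ)
    (h : hsDiv γ' p q ≤ (γ - γ') * (Finset.univ.inf' Finset.univ_nonempty q)) :
    hsDiv γ p q = 0 := by
  apply Finset.sum_eq_zero
  intro x _
  rw [max_eq_left_iff, sub_nonpos]
  by_contra hx
  push_neg at hx
  have hinf : (Finset.univ.inf' Finset.univ_nonempty q) ≤ q x :=
    Finset.inf'_le _ (Finset.mem_univ x)
  have h1 : (γ - γ') * (Finset.univ.inf' Finset.univ_nonempty q) ≤ (γ - γ') * q x :=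
    mul_le_mul_of_nonneg_left hinf (by linarith)
  have h2 : (γ - γ') * q x < p x - γ' * q x := by nlinarith
  have h3 : p x - γ' * q x ≤ max 0 (p x - γ' * q x) := le_max_right _ _
  have h4 : max 0 (p x - γ' * q x) ≤ hsDiv γ' p q := by
    unfold hsDiv
    exact Finset.single_le_sum (f := fun i => max 0 (p i - γ' * q i))
      (fun i _ => le_max_left _ _) (Finset.mem_univ x)
  linarith
end

section
/- Let γ ≥ γ' ≥ 1 and δ ∈ [0,1]. Suppose a classical channel N from finite set X to finite set Y satisfies E_γ(N(·|a)‖N(·|b)) ≤ δ for all a, b ∈ X. Then for all probability distributions p, q on X, E_{γ'}(Np ‖ Nq) ≤ ((γ − γ') + δ(γ' + 1)) / (γ + 1), where Np denotes the output distribution y ↦ ∑_x N(y|x) p(x). -/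
open Finset Real

/-- Action of a classical channel `N : X → (Y → ℝ)` on a distribution `p` on `X`. -/
noncomputable def push {X Y : Type*} [Fintype X] (N : X → Y → ℝ) (p : X → ℝ) : Y → ℝ :=
  fun y => ∑ x, N x y * p x

lemma max0_half (t : ℝ) : max 0 t = (t + |t|) / 2 := by
  rcases le_total 0 t with h | h
  · rw [max_eq_right h, abs_of_nonneg h]; ring
  · rw [max_eq_left h, abs_of_nonpos h]; ring

lemma pair_bound {Y : Type*} [Fintype Y] (μ ν : Y → ℝ) (hμ : IsProb μ) (hν : IsProb ν)
    (γ γ' δ : ℝ) (hγ' : 1 ≤ γ') (hγ : γ' ≤ γ)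
    (h1 : hsDiv γ μ ν ≤ δ) (h2 : hsDiv γ ν μ ≤ δ) :
    hsDiv γ' μ ν ≤ ((γ - γ') + δ * (γ' + 1)) / (γ + 1) := by
  have hγpos : (0:ℝ) < γ + 1 := by linarith
  rcases eq_or_lt_of_le hγ with rfl | hlt
  · have : ((γ' - γ') + δ * (γ' + 1)) / (γ' + 1) = δ := by
      field_simp
      ring
    rw [this]; exact h1
  · have h1γ : (1:ℝ) < γ := lt_of_le_of_lt hγ' hlt
    have hden : (0:ℝ) < γ ^ 2 - 1 := by nlinarith
    set α := (γ * γ' - 1) / (γ ^ 2 - 1) with hα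
    set β := (γ - γ') / (γ ^ 2 - 1) with hβ
    have hα0 : 0 ≤ α := div_nonneg (by nlinarith) hden.le
    have hβ0 : 0 ≤ β := div_nonneg (by linarith) hden.le
    -- pointwise bound
    have key : ∀ y, max 0 (μ y - γ' * ν y) ≤
        α * max 0 (μ y - γ * ν y) + β * max 0 (γ * μ y - ν y) := by
      intro y
      have hid : μ y - γ' * ν y = α * (μ y - γ * ν y) + β * (γ * μ y - ν y) := by
        rw [hα, hβ]; field_simp; ring
      rw [hid]
      have h1' : α * (μ y - γ * ν y) ≤ α * max 0 (μ y - γ * ν y) :=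
        mul_le_mul_of_nonneg_left (le_max_right _ _) hα0
      have h2' : β * (γ * μ y - ν y) ≤ β * max 0 (γ * μ y - ν y) :=
        mul_le_mul_of_nonneg_left (le_max_right _ _) hβ0
      have hrhs : 0 ≤ α * max 0 (μ y - γ * ν y) + β * max 0 (γ * μ y - ν y) := by
        have := mul_nonneg hα0 (le_max_left (0:ℝ) (μ y - γ * ν y))
        have := mul_nonneg hβ0 (le_max_left (0:ℝ) (γ * μ y - ν y))
        linarith
      exact max_le hrhs (by linarith)
    have hsum : ∑ y, max 0 (γ * μ y - ν y) = (γ - 1) + hsDiv γ ν μ := by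
      have : ∀ y, max 0 (γ * μ y - ν y) = (γ * μ y - ν y) + max 0 (ν y - γ * μ y) := by
        intro y
        rcases le_total 0 (γ * μ y - ν y) with h | h
        · rw [max_eq_right h, max_eq_left (by linarith)]; ring
        · rw [max_eq_left h, max_eq_right (by linarith)]; ring
      rw [Finset.sum_congr rfl (fun y _ => this y), Finset.sum_add_distrib]
      unfold hsDiv
      rw [Finset.sum_sub_distrib, ← Finset.mul_sum, hμ.2, hν.2]
      ring
    have hsum' : ∑ y, max 0 (γ * μ y - ν y) ≤ (γ - 1) + δ := by
      rw [hsum]; linarith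
    have step : hsDiv γ' μ ν ≤ α * hsDiv γ μ ν + β * ∑ y, max 0 (γ * μ y - ν y) := by
      unfold hsDiv
      rw [Finset.mul_sum, Finset.mul_sum, ← Finset.sum_add_distrib]
      exact Finset.sum_le_sum fun y _ => key y
    have hfin : α * δ + β * ((γ - 1) + δ) = ((γ - γ') + δ * (γ' + 1)) / (γ + 1) := by
      rw [hα, hβ]
      have h2 : γ ^ 2 - 1 = (γ - 1) * (γ + 1) := by ring
      field_simp
      ring
    calc hsDiv γ' μ ν ≤ α * hsDiv γ μ ν + β * ∑ y, max 0 (γ * μ y - ν y) := step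
      _ ≤ α * δ + β * ((γ - 1) + δ) := by
          have := mul_le_mul_of_nonneg_left h1 hα0
          have := mul_le_mul_of_nonneg_left hsum' hβ0
          linarith
      _ = _ := hfin

theorem stmt8 {X Y : Type*} [Fintype X] [Fintype Y] (N : X → Y → ℝ)
    (hN : ∀ x, IsProb (N x)) (γ γ' δ : ℝ) (hγ' : 1 ≤ γ') (hγ : γ' ≤ γ)
    (hδ0 : 0 ≤ δ) (hδ1 : δ ≤ 1)
    (hLDP : ∀ a b : X, hsDiv γ (N a) (N b) ≤ δ)
    (p q : X → ℝ) (hp : IsProb p) (hq : IsProb q) :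
    hsDiv γ' (push N p) (push N q) ≤ ((γ - γ') + δ * (γ' + 1)) / (γ + 1) := by
  set B := ((γ - γ') + δ * (γ' + 1)) / (γ + 1) with hB
  -- joint convexity
  have hconv : hsDiv γ' (push N p) (push N q) ≤
      ∑ a : X, ∑ b : X, p a * q b * hsDiv γ' (N a) (N b) := by
    unfold hsDiv push
    have hrw : ∀ y : Y, (∑ x, N x y * p x) - γ' * (∑ x, N x y * q x)
        = ∑ a : X, ∑ b : X, p a * q b * (N a y - γ' * N b y) := by
      intro y
      have e1 : ∑ a : X, ∑ b : X, p a * q b * (N a y - γ' * N b y)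
          = ∑ a : X, ∑ b : X, (p a * q b * N a y - p a * q b * (γ' * N b y)) := by
        apply Finset.sum_congr rfl; intro a _
        apply Finset.sum_congr rfl; intro b _; ring
      rw [e1]
      simp only [Finset.sum_sub_distrib]
      have e2 : ∑ a : X, ∑ b : X, p a * q b * N a y = ∑ a : X, p a * N a y := by
        apply Finset.sum_congr rfl; intro a _
        rw [← Finset.sum_mul, ← Finset.mul_sum]
        rw [hq.2]; ring
      have e3 : ∑ a : X, ∑ b : X, p a * q b * (γ' * N b y)
          = γ' * ∑ b : X, q b * N b y := by
        rw [Finset.sum_comm]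
        rw [Finset.mul_sum]
        apply Finset.sum_congr rfl; intro b _
        calc ∑ x : X, p x * q b * (γ' * N b y)
            = (∑ x : X, p x) * (q b * (γ' * N b y)) := by
              rw [Finset.sum_mul]; apply Finset.sum_congr rfl; intro x _; ring
          _ = γ' * (q b * N b y) := by rw [hp.2]; ring
      rw [e2, e3]
      have e4 : ∑ x, N x y * p x = ∑ a : X, p a * N a y := by
        apply Finset.sum_congr rfl; intro a _; ring
      have e5 : ∑ x, N x y * q x = ∑ b : X, q b * N b y := by
        apply Finset.sum_congr rfl; intro b _; ring
      rw [e4, e5]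
    calc ∑ y, max 0 ((∑ x, N x y * p x) - γ' * ∑ x, N x y * q x)
        = ∑ y, max 0 (∑ a : X, ∑ b : X, p a * q b * (N a y - γ' * N b y)) := by
          apply Finset.sum_congr rfl; intro y _; rw [hrw y]
      _ ≤ ∑ y, ∑ a : X, ∑ b : X, max 0 (p a * q b * (N a y - γ' * N b y)) := by
          apply Finset.sum_le_sum; intro y _
          rw [max0_half]
          have habs : |∑ a : X, ∑ b : X, p a * q b * (N a y - γ' * N b y)|
              ≤ ∑ a : X, ∑ b : X, |p a * q b * (N a y - γ' * N b y)| := by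
            calc |∑ a : X, ∑ b : X, p a * q b * (N a y - γ' * N b y)|
                ≤ ∑ a : X, |∑ b : X, p a * q b * (N a y - γ' * N b y)| :=
                  Finset.abs_sum_le_sum_abs _ _
              _ ≤ _ := Finset.sum_le_sum fun a _ => Finset.abs_sum_le_sum_abs _ _
          have hexp : ∑ a : X, ∑ b : X, max 0 (p a * q b * (N a y - γ' * N b y))
              = ∑ a : X, ∑ b : X, ((p a * q b * (N a y - γ' * N b y))
                + |p a * q b * (N a y - γ' * N b y)|) / 2 := by
            apply Finset.sum_congr rfl; intro a _
            apply Finset.sum_congr rfl; intro b _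
            rw [max0_half]
          rw [hexp]
          have hsplit : ∀ a : X, ∑ b : X, ((p a * q b * (N a y - γ' * N b y))
                + |p a * q b * (N a y - γ' * N b y)|) / 2
              = ((∑ b : X, p a * q b * (N a y - γ' * N b y))
                + ∑ b : X, |p a * q b * (N a y - γ' * N b y)|) / 2 := by
            intro a
            rw [← Finset.sum_add_distrib, ← Finset.sum_div]
          simp only [hsplit]
          rw [← Finset.sum_div, Finset.sum_add_distrib]
          apply div_le_div_of_nonneg_right ?_ (by norm_num)
          gcongr
      _ = ∑ a : X, ∑ b : X, p a * q b * ∑ y, max 0 (N a y - γ' * N b y) := by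
          rw [Finset.sum_comm]
          apply Finset.sum_congr rfl; intro a _
          rw [Finset.sum_comm]
          apply Finset.sum_congr rfl; intro b _
          rw [Finset.mul_sum]
          apply Finset.sum_congr rfl; intro y _
          have hpq : 0 ≤ p a * q b := mul_nonneg (hp.1 a) (hq.1 b)
          rcases le_total 0 (N a y - γ' * N b y) with h | h
          · rw [max_eq_right h, max_eq_right (mul_nonneg hpq h)]
          · rw [max_eq_left h, max_eq_left (by nlinarith), mul_zero]
  -- each term bounded
  have hterm : ∀ a b : X, hsDiv γ' (N a) (N b) ≤ B :=
    fun a b => pair_bound (N a) (N b) (hN a) (hN b) γ γ' δ hγ' hγ (hLDP a b) (hLDP b a)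
  have hBnn : 0 ≤ B := by
    have : 0 ≤ hsDiv γ' (push N p) (push N q) := by
      unfold hsDiv
      exact Finset.sum_nonneg fun y _ => le_max_left _ _
    -- B ≥ 0 directly: numerator nonneg
    have hγpos : (0:ℝ) < γ + 1 := by linarith
    apply div_nonneg _ hγpos.le
    nlinarith
  calc hsDiv γ' (push N p) (push N q)
      ≤ ∑ a : X, ∑ b : X, p a * q b * hsDiv γ' (N a) (N b) := hconv
    _ ≤ ∑ a : X, ∑ b : X, p a * q b * B := by
        apply Finset.sum_le_sum; intro a _
        apply Finset.sum_le_sum; intro b _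
        exact mul_le_mul_of_nonneg_left (hterm a b) (mul_nonneg (hp.1 a) (hq.1 b))
    _ = B := by
        have h : ∀ a : X, ∑ b : X, p a * q b * B = p a * B := by
          intro a
          rw [← Finset.sum_mul, ← Finset.mul_sum, hq.2, mul_one]
        rw [Finset.sum_congr rfl (fun a _ => h a), ← Finset.sum_mul, hp.2, one_mul]
end

section
/- Let γ_1, ..., γ_n ≥ 1 and γ' ≥ 1 with γ' ≤ γ_i for all i. Define the sequence of functions G_i(t) := max(0, ((γ_i − 1)/(γ_i + 1)) t − (γ'−1)/(γ_i + 1)) on [0,1]. Then the composition G_n ∘ ⋯ ∘ G_1 satisfies (G_n ∘ ⋯ ∘ G_1)(t) ≤ max(0, t·∏_{i=1}^n (γ_i−1)/(γ_i+1) − ((γ'−1)/2)(1 − ∏_{i=1}^n (γ_i−1)/(γ_i+1))). -/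
open Finset

lemma prodle14 : ∀ (l : List ℝ), (∀ x ∈ l, 0 ≤ x ∧ x ≤ 1) → l.prod ≤ 1 := by
  intro l
  induction l with
  | nil => simp
  | cons c l ih =>
    intro h
    have hc := h c List.mem_cons_self
    have hl : ∀ x ∈ l, 0 ≤ x ∧ x ≤ 1 := fun x hx => h x (List.mem_cons_of_mem _ hx)
    have hP0 : 0 ≤ l.prod := List.prod_nonneg (fun x hx => (hl x hx).1)
    rw [List.prod_cons]
    calc c * l.prod ≤ 1 * 1 := mul_le_mul hc.2 (ih hl) hP0 zero_le_one
    _ = 1 := one_mul 1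

lemma aux14 (b : ℝ) (hb : 0 ≤ b) :
    ∀ (l : List ℝ), (∀ c ∈ l, 0 ≤ c ∧ c ≤ 1) → ∀ t : ℝ, 0 ≤ t →
    (l.map (fun c => fun s : ℝ => max 0 (c * s - b * (1 - c)))).foldl
      (fun s g => g s) t = max 0 (t * l.prod - b * (1 - l.prod)) := by
  intro l
  induction l with
  | nil =>
    intro _ t ht
    simp [max_eq_right ht]
  | cons c l ih =>
    intro hmem t ht
    have hc := hmem c List.mem_cons_self
    have hl : ∀ x ∈ l, 0 ≤ x ∧ x ≤ 1 := fun x hx => hmem x (List.mem_cons_of_mem _ hx)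
    have hP0 : 0 ≤ l.prod := List.prod_nonneg (fun x hx => (hl x hx).1)
    have hP1 : l.prod ≤ 1 := prodle14 l hl
    simp only [List.map_cons, List.foldl_cons]
    rw [ih hl _ (le_max_left _ _)]
    have hd : 0 ≤ b * (1 - l.prod) := mul_nonneg hb (by linarith)
    have h1 : max 0 (c * t - b * (1 - c)) * l.prod
        = max 0 ((c * t - b * (1 - c)) * l.prod) := by
      rw [max_mul_of_nonneg _ _ hP0, zero_mul]
    rw [h1]
    have h2 : max 0 (max 0 ((c * t - b * (1 - c)) * l.prod) - b * (1 - l.prod))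
        = max 0 ((c * t - b * (1 - c)) * l.prod - b * (1 - l.prod)) := by
      rcases le_or_gt ((c * t - b * (1 - c)) * l.prod) 0 with h | h
      · rw [max_eq_left h, max_eq_left (by linarith), max_eq_left (by linarith)]
      · rw [max_eq_right h.le]
    rw [h2]
    ring_nf
    rw [List.prod_cons]
    ring_nf

theorem stmt14 (n : ℕ) (γ : Fin n → ℝ) (γ' : ℝ) (hγ' : 1 ≤ γ')
    (hγ : ∀ i, γ' ≤ γ i) (t : ℝ) (ht0 : 0 ≤ t) (ht1 : t ≤ 1) :
    ((List.ofFn (fun i : Fin n => fun s : ℝ =>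
        max 0 (((γ i - 1) / (γ i + 1)) * s - (γ' - 1) / (γ i + 1)))).foldl
      (fun s g => g s) t)
      ≤ max 0 (t * ∏ i, (γ i - 1) / (γ i + 1)
          - ((γ' - 1) / 2) * (1 - ∏ i, (γ i - 1) / (γ i + 1))) := by
  set b := (γ' - 1) / 2 with hb_def
  have hb : 0 ≤ b := by unfold b; linarith
  set c : Fin n → ℝ := fun i => (γ i - 1) / (γ i + 1) with hc_def
  have hpos : ∀ i, (0:ℝ) < γ i + 1 := fun i => by have := hγ i; linarith
  have hfun : (fun i : Fin n => fun s : ℝ =>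
        max 0 (((γ i - 1) / (γ i + 1)) * s - (γ' - 1) / (γ i + 1)))
      = (fun x => fun s : ℝ => max 0 (x * s - b * (1 - x))) ∘ c := by
    funext i s
    have h := (hpos i).ne'
    congr 1
    unfold b c
    field_simp
    ring
  rw [hfun, ← List.map_ofFn]
  have hmem : ∀ x ∈ List.ofFn c, 0 ≤ x ∧ x ≤ 1 := by
    intro x hx
    rw [List.mem_ofFn] at hx
    obtain ⟨i, rfl⟩ := hx
    have h1 := hγ i
    have h2 := hpos i
    constructor
    · apply div_nonneg _ h2.le; linarith
    · rw [div_le_one h2]; linarith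
  rw [aux14 b hb _ hmem t ht0, List.prod_ofFn]
end

section
/- For probability distributions p, q on a finite set, γ ≥ 1, and any channel N on that set, write p − γq = λ₊ τ₊ − λ₋ τ₋ where λ₊ = ∑ max(0, p−γq), λ₋ = ∑ max(0, γq−p), and τ± are the normalized positive/negative parts (assume λ₊ > 0 and λ₋ > 0). Then E_γ(Np‖Nq) = λ₊ · E_{λ₋/λ₊}(Nτ₊ ‖ Nτ₋), and λ₋/λ₊ = 1 − (1−γ)/λ₊. -/
open Finset Real

/-- Full hockey-stick divergence `E_β(u‖v) = ∑ max(0, u − βv) − max(0, 1−β)`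
(for probability distributions), valid for all `β ≥ 0`. -/
noncomputable def hsDivFull {X : Type*} [Fintype X] (β : ℝ) (u v : X → ℝ) : ℝ :=
  (∑ x, max 0 (u x - β * v x)) - max 0 (1 - β)

theorem stmt18 {X Y : Type*} [Fintype X] [Fintype Y] (p q : X → ℝ)
    (hp : IsProb p) (hq : IsProb q) (γ : ℝ) (hγ : 1 ≤ γ)
    (N : X → Y → ℝ) (hN : ∀ x, IsProb (N x))
    (lamP lamM : ℝ) (hlamP : lamP = ∑ x, max 0 (p x - γ * q x))
    (hlamM : lamM = ∑ x, max 0 (γ * q x - p x))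
    (hP : 0 < lamP) (hM : 0 < lamM)
    (τP τM : X → ℝ) (hτP : τP = fun x => max 0 (p x - γ * q x) / lamP)
    (hτM : τM = fun x => max 0 (γ * q x - p x) / lamM) :
    hsDivFull γ (push N p) (push N q)
        = lamP * hsDivFull (lamM / lamP) (push N τP) (push N τM) ∧
      lamM / lamP = 1 - (1 - γ) / lamP := by
  have hPne : lamP ≠ 0 := ne_of_gt hP
  -- pointwise decomposition
  have hdiff : ∀ x, lamP * τP x - lamM * τM x = p x - γ * q x := by
    intro x
    rw [hτP, hτM]
    simp only [mul_div_cancel₀ _ hPne, mul_div_cancel₀ _ (ne_of_gt hM)]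
    rcases le_total 0 (p x - γ * q x) with h | h
    · rw [max_eq_right h, max_eq_left (by linarith)]; ring
    · rw [max_eq_left (by linarith), max_eq_right (by linarith)]; ring
  -- sum identity: lamP - lamM = 1 - γ
  have hsum : lamP - lamM = 1 - γ := by
    rw [hlamP, hlamM, ← Finset.sum_sub_distrib]
    have : ∀ x ∈ Finset.univ, max 0 (p x - γ * q x) - max 0 (γ * q x - p x)
        = p x - γ * q x := by
      intro x _
      rcases le_total 0 (p x - γ * q x) with h | h
      · rw [max_eq_right h, max_eq_left (by linarith)]; ring
      · rw [max_eq_left (by linarith), max_eq_right (by linarith)]; ring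
    rw [Finset.sum_congr rfl this, Finset.sum_sub_distrib, ← Finset.mul_sum,
      hp.2, hq.2, mul_one]
  have hMge : lamP ≤ lamM := by linarith
  have hβ : 1 ≤ lamM / lamP := (one_le_div hP).mpr hMge
  -- pushforward decomposition
  have hpush : ∀ y, push N p y - γ * push N q y
      = lamP * push N τP y - lamM * push N τM y := by
    intro y
    simp only [push, Finset.mul_sum, ← Finset.sum_sub_distrib]
    refine Finset.sum_congr rfl fun x _ => ?_
    have h := hdiff x
    have : N x y * (lamP * τP x - lamM * τM x) = N x y * (p x - γ * q x) := by rw [h]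
    nlinarith [this]
  constructor
  · unfold hsDivFull
    rw [max_eq_left (by linarith), max_eq_left (by linarith), sub_zero, sub_zero,
      Finset.mul_sum]
    refine Finset.sum_congr rfl fun y _ => ?_
    rw [show push N p y - γ * push N q y
        = lamP * (push N τP y - lamM / lamP * push N τM y) by
      rw [hpush y]; field_simp]
    rw [mul_max_of_nonneg _ _ hP.le, mul_zero]
  · field_simp
    linarith
end
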